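/- Let X• be a 2-Segal simplicial set. Then its left path space P◁X• (defined by (P◁X)_n = X_{n+1} with face maps ∂_i^◁ = ∂_{i+1} and degeneracy maps s_i^◁ = s_{i+1}) is a 1-Segal simplicial set. -/

import Mathlib

open CategoryTheory Simplicial SimplexCategory Opposite

namespace RelSegal

/-- The morphism `[m] ⟶ [n]` in the simplex category determined by a monotone `ℕ`-valued map. -/
def natHom (m n : ℕ) (f : ℕ → ℕ) (hf : Monotone f) (h : f m ≤ n) :
    (⦋m⦌ : SimplexCategory) ⟶ ⦋n⦌ :=
  SimplexCategory.mkHom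
    { toFun := fun k => ⟨f k.1, by have := hf (Nat.lt_succ_iff.mp k.2); omega⟩
      monotone' := fun a b hab => by
        simp only [Fin.mk_le_mk]; exact hf hab }

/-- Restriction of simplices along a morphism of the simplex category. -/
def rmap (X : SSet) {m n : ℕ} (φ : (⦋m⦌ : SimplexCategory) ⟶ ⦋n⦌) :
    X.obj (op ⦋n⦌) → X.obj (op ⦋m⦌) := X.map φ.op

/-- The inclusion of the vertex `i` of `[n]`. -/
def vert (n i : ℕ) (h : i ≤ n) : (⦋0⦌ : SimplexCategory) ⟶ ⦋n⦌ :=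
  natHom 0 n (fun _ => i) monotone_const h

/-- The inclusion of the edge `{i,j}` of `[n]`. -/
def edge (n i j : ℕ) (hij : i ≤ j) (hj : j ≤ n) : (⦋1⦌ : SimplexCategory) ⟶ ⦋n⦌ :=
  natHom 1 n (fun k => i + k * (j - i))
    (fun a b hab => by
      have := Nat.mul_le_mul_right (j - i) hab
      show i + a * (j - i) ≤ i + b * (j - i); omega)
    (by show i + 1 * (j - i) ≤ n; omega)

/-- The inclusion of the interval `{i, i+1, …, j}` of `[n]`. -/
def interval (n i j : ℕ) (hij : i ≤ j) (hj : j ≤ n) : (⦋j - i⦌ : SimplexCategory) ⟶ ⦋n⦌ :=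
  natHom (j - i) n (fun k => i + k) (fun a b hab => by show i + a ≤ i + b; omega)
    (by show i + (j - i) ≤ n; omega)

/-- A commutative square of sets which is a pullback: the canonical map into the fibre
product is a bijection. -/
def IsSetPullback {A B C D : Type*} (p : A → B) (q : A → C) (g : B → D) (h : C → D) : Prop :=
  (∀ a, g (p a) = h (q a)) ∧ ∀ b c, g b = h c → ∃! a, p a = b ∧ q a = c

/-- A simplicial set is `1`-Segal if for every `n ≥ 2` the Segal map
`X_n → X_1 ×_{X_0} ⋯ ×_{X_0} X_1` is a bijection (injectivity together with
surjectivity onto the compatible families). -/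
def Is1Segal (X : SSet) : Prop :=
  ∀ n, 2 ≤ n →
    (∀ x y : X.obj (op ⦋n⦌),
      (∀ i (hi : i + 1 ≤ n),
        rmap X (edge n i (i + 1) (by omega) hi) x = rmap X (edge n i (i + 1) (by omega) hi) y) →
      x = y) ∧
    (∀ f : ∀ i, i + 1 ≤ n → X.obj (op ⦋1⦌),
      (∀ i (h1 : i + 1 ≤ n) (h2 : (i + 1) + 1 ≤ n),
        rmap X (vert 1 1 le_rfl) (f i h1) = rmap X (vert 1 0 (by omega)) (f (i + 1) h2)) →
      ∃ x : X.obj (op ⦋n⦌), ∀ i (hi : i + 1 ≤ n),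
        rmap X (edge n i (i + 1) (by omega) hi) x = f i hi)

/-- The inclusion of the subset `{0, …, i, j, …, n}` of `[n]`. -/
def outer (n i j : ℕ) (hij : i < j) (hj : j ≤ n) :
    (⦋n - j + i + 1⦌ : SimplexCategory) ⟶ ⦋n⦌ :=
  natHom (n - j + i + 1) n (fun k => if k ≤ i then k else k + (j - i - 1))
    (fun a b hab => by dsimp only; split_ifs <;> omega)
    (by (try dsimp only); split_ifs <;> omega)

/-- A simplicial set is `2`-Segal if for every `n ≥ 3` and `0 ≤ i < j ≤ n` the map
`X_n → X_{{i,…,j}} ×_{X_{{i,j}}} X_{{0,…,i,j,…,n}}` is a bijection. -/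
def Is2Segal (X : SSet) : Prop :=
  ∀ n i j (_ : 3 ≤ n) (hij : i < j) (hj : j ≤ n),
    IsSetPullback
      (rmap X (interval n i j hij.le hj))
      (rmap X (outer n i j hij hj))
      (rmap X (edge (j - i) 0 (j - i) (Nat.zero_le _) le_rfl))
      (rmap X (edge (n - j + i + 1) i (i + 1) (by omega) (by omega)))

/-- The map `[m+1] ⟶ [n+1]` obtained from `f : [m] ⟶ [n]` by adjoining an initial
vertex (left join with a point). -/
def joinHom {m n : SimplexCategory} (f : m ⟶ n) :
    (⦋m.len + 1⦌ : SimplexCategory) ⟶ ⦋n.len + 1⦌ :=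
  SimplexCategory.mkHom
    { toFun := Fin.cases 0 (fun i => (f.toOrderHom i).succ)
      monotone' := by
        intro a b hab
        induction a using Fin.cases with
        | zero => simp [Fin.zero_le]
        | succ i =>
          induction b using Fin.cases with
          | zero => exact absurd (Fin.le_zero_iff.mp hab) (Fin.succ_ne_zero i)
          | succ j =>
            simp only [Fin.cases_succ]
            exact Fin.succ_le_succ_iff.mpr
              (f.toOrderHom.monotone (Fin.succ_le_succ_iff.mp hab)) }

/-- The left join functor `[n] ↦ [0] ⋆ [n] ≅ [n+1]` on the simplex category. -/
def leftJoin : SimplexCategory ⥤ SimplexCategory where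
  obj m := ⦋m.len + 1⦌
  map f := joinHom f
  map_id m := by
    apply SimplexCategory.Hom.ext
    apply OrderHom.ext
    funext k
    induction k using Fin.cases <;> simp [joinHom]
  map_comp f g := by
    apply SimplexCategory.Hom.ext
    apply OrderHom.ext
    funext k
    induction k using Fin.cases <;> simp [joinHom] <;> rfl

/-- The left path space of a simplicial set: precomposition with the left join,
so that `(P◁X)_n = X_{n+1}`, `∂ᵢ◁ = ∂_{i+1}` and `sᵢ◁ = s_{i+1}`. -/
def leftPath (X : SSet) : SSet := leftJoin.op ⋙ X

/-! An `n`-simplex of `P◁X` is an `(n+1)`-simplex `x` of `X` with an extra initial vertex `0`;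
its spine consists of the triangles `{0, i+1, i+2}` of `x`. For `n ≥ 2`, the first of them is
`x|{0,1,2}` and the others form the spine of the `(n-1)`-simplex `x|{0,2,…,n+1}` of `P◁X`.
The `2`-Segal condition for `(i, j) = (0, 2)` says that `x` is determined by exactly these two
faces, glued along the edge `{0,2}`, so the Segal condition for `P◁X` propagates from
`n - 1` to `n`; for `n = 1` it is trivial. -/

lemma rmap_comp (X : SSet) {k m n : ℕ} (ψ : (⦋k⦌ : SimplexCategory) ⟶ ⦋m⦌)
    (φ : (⦋m⦌ : SimplexCategory) ⟶ ⦋n⦌) (x : X.obj (op ⦋n⦌)) :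
    rmap X (ψ ≫ φ) x = rmap X ψ (rmap X φ x) := by
  simp [rmap]

lemma IsSetPullback.eq_of_eq {A B C D : Type*} {p : A → B} {q : A → C} {g : B → D}
    {h : C → D} (H : IsSetPullback p q g h) {a a' : A} (hp : p a = p a') (hq : q a = q a') :
    a = a' :=
  (H.2 _ _ (H.1 a')).unique ⟨hp, hq⟩ ⟨rfl, rfl⟩

lemma IsSetPullback.exists_of_eq {A B C D : Type*} {p : A → B} {q : A → C} {g : B → D}
    {h : C → D} (H : IsSetPullback p q g h) {b : B} {c : C} (hbc : g b = h c) :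
    ∃ a, p a = b ∧ q a = c :=
  (H.2 b c hbc).exists

section natHom

lemma natHom_ext {m n : ℕ} {f g : ℕ → ℕ} {hf : Monotone f} {hg : Monotone g}
    {h₁ : f m ≤ n} {h₂ : g m ≤ n} (H : ∀ k ≤ m, f k = g k) :
    natHom m n f hf h₁ = natHom m n g hg h₂ := by
  ext k : 3
  exact Fin.ext (H k (Nat.lt_succ_iff.mp k.2))

lemma natHom_comp_natHom {k m n : ℕ} {f g h : ℕ → ℕ} {hf : Monotone f} {hg : Monotone g}
    {hh : Monotone h} {h₁ : f k ≤ m} {h₂ : g m ≤ n} {h₃ : h k ≤ n}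
    (H : ∀ x ≤ k, g (f x) = h x) :
    natHom k m f hf h₁ ≫ natHom m n g hg h₂ = natHom k n h hh h₃ := by
  ext x : 3
  exact Fin.ext (H x (Nat.lt_succ_iff.mp x.2))

lemma joinHom_natHom {m n : ℕ} (f : ℕ → ℕ) (hf : Monotone f) (h : f m ≤ n) :
    joinHom (natHom m n f hf h) =
      natHom (m + 1) (n + 1) (fun k => if k = 0 then 0 else f (k - 1) + 1)
        (fun a b hab => by
          dsimp only
          split_ifs
          · exact le_rfl
          · exact Nat.zero_le _
          · omega
          · have := hf (show a - 1 ≤ b - 1 by omega); omega)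
        (by simp only [Nat.add_sub_cancel]; split_ifs <;> omega) := by
  ext k : 3
  induction k using Fin.cases <;> rfl

lemma joinHom_edge (n i j : ℕ) (hij : i ≤ j) (hj : j ≤ n) :
    joinHom (edge n i j hij hj) =
      natHom 2 (n + 1) (fun k => if k = 0 then 0 else i + (k - 1) * (j - i) + 1)
        (fun a b hab => by
          dsimp only
          split_ifs
          · exact le_rfl
          · exact Nat.zero_le _
          · omega
          · have := Nat.mul_le_mul_right (j - i) (show a - 1 ≤ b - 1 by omega); omega)
        (by split_ifs <;> omega) :=
  joinHom_natHom _ _ _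

lemma joinHom_vert (n i : ℕ) (h : i ≤ n) :
    joinHom (vert n i h) =
      natHom 1 (n + 1) (fun k => if k = 0 then 0 else i + 1)
        (fun a b hab => by dsimp only; split_ifs <;> omega) (by split_ifs <;> omega) :=
  joinHom_natHom _ _ _

end natHom

lemma edge_zero_one_eq_id : edge 1 0 1 (by omega) le_rfl = 𝟙 ⦋1⦌ := by
  ext k : 3
  simp [edge, natHom]

lemma joinHom_edge_zero_one (m : ℕ) :
    joinHom (edge (m + 2) 0 1 (by omega) (by omega)) =
      interval (m + 3) 0 2 (by omega) (by omega) := by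
  rw [joinHom_edge]
  exact natHom_ext fun k hk => by split_ifs <;> omega

lemma joinHom_edge_comp_outer (m i : ℕ) (hi : i + 1 ≤ m + 1) :
    joinHom (edge (m + 1) i (i + 1) (by omega) hi) ≫ outer (m + 3) 0 2 (by omega) (by omega) =
      joinHom (edge (m + 2) (i + 1) (i + 2) (by omega) (by omega)) := by
  rw [joinHom_edge, joinHom_edge]
  exact natHom_comp_natHom fun x hx => by
    simp only [show i + 1 - i = 1 by omega, show i + 2 - (i + 1) = 1 by omega, mul_one]
    split_ifs <;> omega

lemma joinHom_vert_zero : joinHom (vert 1 0 (by omega)) = edge 2 0 1 (by omega) (by omega) := by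
  rw [joinHom_vert]
  exact natHom_ext fun k hk => by split_ifs <;> omega

lemma joinHom_vert_one : joinHom (vert 1 1 le_rfl) = edge 2 0 2 (by omega) le_rfl := by
  rw [joinHom_vert]
  exact natHom_ext fun k hk => by split_ifs <;> omega

lemma edge_comp_joinHom_edge (m : ℕ) :
    edge 2 0 1 (by omega) (by omega) ≫ joinHom (edge (m + 1) 0 1 (by omega) (by omega)) =
      edge (m + 2) 0 1 (by omega) (by omega) := by
  rw [joinHom_edge]
  exact natHom_comp_natHom fun x hx => by split_ifs <;> omega

section Segal

variable (X : SSet)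

def SegalInjectiveAt (n : ℕ) : Prop :=
  ∀ x y : X.obj (op ⦋n⦌),
    (∀ i (hi : i + 1 ≤ n),
      rmap X (edge n i (i + 1) (by omega) hi) x = rmap X (edge n i (i + 1) (by omega) hi) y) →
    x = y

def SegalSurjectiveAt (n : ℕ) : Prop :=
  ∀ f : ∀ i, i + 1 ≤ n → X.obj (op ⦋1⦌),
    (∀ i (h1 : i + 1 ≤ n) (h2 : (i + 1) + 1 ≤ n),
      rmap X (vert 1 1 le_rfl) (f i h1) = rmap X (vert 1 0 (by omega)) (f (i + 1) h2)) →
    ∃ x : X.obj (op ⦋n⦌), ∀ i (hi : i + 1 ≤ n),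
      rmap X (edge n i (i + 1) (by omega) hi) x = f i hi

lemma is1Segal_iff :
    Is1Segal X ↔ ∀ n, 2 ≤ n → SegalInjectiveAt X n ∧ SegalSurjectiveAt X n :=
  Iff.rfl

lemma segalInjectiveAt_one : SegalInjectiveAt X 1 := fun x y h => by
  simpa [edge_zero_one_eq_id, rmap] using h 0 le_rfl

lemma segalSurjectiveAt_one : SegalSurjectiveAt X 1 := fun f _ =>
  ⟨f 0 le_rfl, fun i hi => by
    obtain rfl : i = 0 := by omega
    simp [edge_zero_one_eq_id, rmap]⟩

end Segal

section LeftPath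

variable {X : SSet} (m : ℕ)

lemma leftPath_rmap_edge_zero (x : (leftPath X).obj (op ⦋m + 2⦌)) :
    rmap (leftPath X) (edge (m + 2) 0 1 (by omega) (by omega)) x =
      rmap X (interval (m + 3) 0 2 (by omega) (by omega)) x :=
  congrArg (fun φ => rmap X φ x) (joinHom_edge_zero_one m)

lemma leftPath_rmap_edge_succ (x : (leftPath X).obj (op ⦋m + 2⦌)) (i : ℕ)
    (hi : i + 1 ≤ m + 1) :
    rmap (leftPath X) (edge (m + 2) (i + 1) (i + 2) (by omega) (by omega)) x =
      rmap (leftPath X) (edge (m + 1) i (i + 1) (by omega) hi)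
        (rmap X (outer (m + 3) 0 2 (by omega) (by omega)) x) :=
  (congrArg (fun φ => rmap X φ x) (joinHom_edge_comp_outer m i hi)).symm.trans
    (rmap_comp X _ _ x)

lemma leftPath_rmap_vert_zero_edge (y : (leftPath X).obj (op ⦋m + 1⦌)) :
    rmap (leftPath X) (vert 1 0 (by omega))
        (rmap (leftPath X) (edge (m + 1) 0 1 (by omega) (by omega)) y) =
      rmap X (edge (m + 2) 0 1 (by omega) (by omega)) y :=
  (congrArg (fun φ => rmap X φ _) joinHom_vert_zero).trans
    ((rmap_comp X _ _ y).symm.trans (congrArg (fun φ => rmap X φ y) (edge_comp_joinHom_edge m)))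

variable {m}

lemma Is2Segal.leftPath_segalInjectiveAt_succ (hX : Is2Segal X)
    (h : SegalInjectiveAt (leftPath X) (m + 1)) : SegalInjectiveAt (leftPath X) (m + 2) := by
  intro x y hxy
  refine (hX (m + 3) 0 2 (by omega) (by omega) (by omega)).eq_of_eq ?_ (h _ _ fun i hi => ?_)
  · exact (leftPath_rmap_edge_zero m x).symm.trans
      ((hxy 0 (by omega)).trans (leftPath_rmap_edge_zero m y))
  · exact (leftPath_rmap_edge_succ m x i hi).symm.trans
      ((hxy (i + 1) (by omega)).trans (leftPath_rmap_edge_succ m y i hi))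

lemma Is2Segal.leftPath_segalSurjectiveAt_succ (hX : Is2Segal X)
    (h : SegalSurjectiveAt (leftPath X) (m + 1)) : SegalSurjectiveAt (leftPath X) (m + 2) := by
  intro f hf
  obtain ⟨y, hy⟩ := h (fun i _ => f (i + 1) (by omega))
    (fun i _ _ => hf (i + 1) (by omega) (by omega))
  have hglue : rmap X (edge 2 0 2 (by omega) le_rfl) (f 0 (by omega)) =
      rmap X (edge (m + 2) 0 1 (by omega) (by omega)) y := by
    -- the edge `{0,2}` of `f 0` is its last vertex in `P◁X`, which is the first vertex of `f 1`
    refine (congrArg (fun φ => rmap X φ _) joinHom_vert_one).symm.trans ?_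
    refine (hf 0 (by omega) (by omega)).trans (Eq.trans ?_ (leftPath_rmap_vert_zero_edge m y))
    exact congrArg _ (hy 0 (by omega)).symm
  obtain ⟨x, hx_triangle, hx_face⟩ :=
    (hX (m + 3) 0 2 (by omega) (by omega) (by omega)).exists_of_eq hglue
  refine ⟨x, fun i hi => ?_⟩
  cases i with
  | zero => exact (leftPath_rmap_edge_zero m x).trans hx_triangle
  | succ i =>
    refine (leftPath_rmap_edge_succ m x i (by omega)).trans ?_
    rw [hx_face]
    exact hy i (by omega)

theorem Is2Segal.leftPath_segalInjectiveAt (hX : Is2Segal X) (m : ℕ) :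
    SegalInjectiveAt (leftPath X) (m + 1) := by
  induction m with
  | zero => exact segalInjectiveAt_one _
  | succ m ih => exact hX.leftPath_segalInjectiveAt_succ ih

theorem Is2Segal.leftPath_segalSurjectiveAt (hX : Is2Segal X) (m : ℕ) :
    SegalSurjectiveAt (leftPath X) (m + 1) := by
  induction m with
  | zero => exact segalSurjectiveAt_one _
  | succ m ih => exact hX.leftPath_segalSurjectiveAt_succ ih

end LeftPath

/-- the left path space of a 2-Segal simplicial set is 1-Segal. -/
theorem statement5 (X : SSet) (hX : Is2Segal X) : Is1Segal (leftPath X) := by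
  refine (is1Segal_iff _).2 fun n hn => ?_
  obtain ⟨m, rfl⟩ : ∃ m, n = m + 1 := ⟨n - 1, by omega⟩
  exact ⟨hX.leftPath_segalInjectiveAt m, hX.leftPath_segalSurjectiveAt m⟩

end RelSegal
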